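/- arXiv:1011.6304 — 2 statements merged into one kernel-verified Lean document; each statement's English description precedes it below -/
import Mathlib

section
/- Region crossing change is an unknotting operation on knot diagrams: any knot diagram can be transformed into a diagram of the trivial knot by a finite sequence of region crossing changes (without Reidemeister moves). -/
/-!
STATEMENT 8: region crossing change is an unknotting operation on knot
diagrams: any knot diagram can be transformed into a diagram of the trivial
knot by a finite sequence of region crossing changes (without Reidemeister
moves).

A knot diagram is modelled faithfully by a rotation system.  A *dart* is a
pair `(v, i)`: the `i`-th edge-end (in counterclockwise cyclic order) at the
crossing `v`.  The fixed-point-free involution `α` pairs the two ends of each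
edge of the underlying 4-valent graph; `opp` sends a dart to the opposite dart
at the same crossing (continuing along the same strand).  The diagram is a
*knot* diagram when the relation generated by `α` and `opp` relates all darts
(the underlying curve has a single component), and it is *planar* (lies on
`S²`) when Euler's formula holds: the face permutation `α.trans rot` has
exactly `n + 2` orbits.  Regions are the orbits of the face permutation, and
`M R c` is the parity of the number of corners (darts) of the region `R` at
the crossing `c`.  Region crossing changes at a finite set `P` of regions add
`∑_{R ∈ P} M R ·` to the over/under vector in `F₂ = ZMod 2`.
-/

open Equiv

abbrev Dart (n : ℕ) := Fin n × Fin 4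

/-- the rotation of darts around a crossing -/
def rot (n : ℕ) : Equiv.Perm (Dart n) :=
  (Equiv.refl (Fin n)).prodCongr (Equiv.addRight (1 : Fin 4))

/-- the opposite dart at the same crossing (same strand) -/
def opp (n : ℕ) : Equiv.Perm (Dart n) :=
  (Equiv.refl (Fin n)).prodCongr (Equiv.addRight (2 : Fin 4))

/-- the setoid whose classes are the cycles (orbits) of a permutation -/
def cycleSetoid {β : Type*} (f : Equiv.Perm β) : Setoid β :=
  ⟨f.SameCycle, ⟨fun _ => Equiv.Perm.SameCycle.refl f _,
    Equiv.Perm.SameCycle.symm, Equiv.Perm.SameCycle.trans⟩⟩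

/-- a knot diagram with `n` crossings, encoded by a rotation system -/
structure KnotDiagram (n : ℕ) where
  pos : 0 < n
  /-- the fixed-point-free involution pairing the two ends of each edge -/
  α : Equiv.Perm (Dart n)
  invol : ∀ d, α (α d) = d
  no_fix : ∀ d, α d ≠ d
  /-- the underlying curve has a single component (it is a knot diagram) -/
  oneComponent : ∀ d d' : Dart n,
    Relation.EqvGen (fun x y => y = α x ∨ y = opp n x) d d'
  /-- planarity via Euler's formula: the face permutation has `n + 2` orbits -/
  planar : Nat.card (Quotient (cycleSetoid (α.trans (rot n)))) = n + 2

/-- the regions (faces) of a knot diagram -/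
def KnotDiagram.Region {n : ℕ} (D : KnotDiagram n) : Type :=
  Quotient (cycleSetoid (D.α.trans (rot n)))

/-- the region in whose boundary a given dart (corner) lies -/
def KnotDiagram.regionOf {n : ℕ} (D : KnotDiagram n) (d : Dart n) : D.Region :=
  Quotient.mk _ d

/-- the region-crossing incidence matrix over `F₂`: the parity of the number
of corners of region `R` at crossing `c` -/
noncomputable def KnotDiagram.M {n : ℕ} (D : KnotDiagram n) (R : D.Region) (c : Fin n) :
    ZMod 2 :=
  (Nat.card {i : Fin 4 // D.regionOf (c, i) = R} : ZMod 2)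

/-- the effect of region crossing changes at a set `P` of regions on the
crossing `c` -/
noncomputable def KnotDiagram.effect {n : ℕ} (D : KnotDiagram n) (P : Finset D.Region)
    (c : Fin n) : ZMod 2 :=
  ∑ R ∈ P, D.M R c

/-!
Region crossing changes act on over/under data through the `𝔽₂`-linear map sending a set of
regions to the vector of corner counts at each crossing, so it suffices that this map is
surjective. An element of its kernel is determined by its values on two adjacent regions:
crossing an edge changes it by an amount that is the same along the whole (connected) knot.
So the kernel has dimension at most `2`, and by Euler's formula there are `n + 2` regions.
-/

theorem Fin.sum_univ_four_rotate {M : Type*} [AddCommMonoid M] (f : Fin 4 → M)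
    (a : Fin 4) : ∑ i, f i = f a + f (a + 1) + f (a + 2) + f (a + 3) := by
  rw [← Equiv.sum_comp (Equiv.addLeft a), Fin.sum_univ_four]
  simp

theorem rot_apply {n : ℕ} (d : Dart n) : rot n d = (d.1, d.2 + 1) := rfl

theorem opp_apply {n : ℕ} (d : Dart n) : opp n d = (d.1, d.2 + 2) := rfl

theorem opp_eq_rot_rot {n : ℕ} (d : Dart n) : opp n d = rot n (rot n d) := by
  simp only [rot_apply, opp_apply, add_assoc]
  rfl

namespace KnotDiagram

variable {n : ℕ} (D : KnotDiagram n)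

instance : Finite D.Region := Quotient.finite _

theorem regionOf_α (d : Dart n) : D.regionOf (D.α d) = D.regionOf (rot n d) :=
  Quotient.sound ⟨1, by simp [D.invol]⟩

theorem apply_eq_of_α_invariant_of_opp_invariant {β : Type*} (f : Dart n → β)
    (hα : ∀ d, f (D.α d) = f d) (hopp : ∀ d, f (opp n d) = f d) (d d' : Dart n) :
    f d = f d' := by
  induction D.oneComponent d d' with
  | rel a b hab => rcases hab with rfl | rfl <;> simp [hα, hopp]
  | refl => rfl
  | symm _ _ _ ih => exact ih.symm
  | trans _ _ _ _ _ ih₁ ih₂ => exact ih₁.trans ih₂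

noncomputable def cornerSum : (D.Region → ZMod 2) →ₗ[ZMod 2] (Fin n → ZMod 2) :=
  LinearMap.pi fun c => ∑ i : Fin 4, LinearMap.proj (D.regionOf (c, i))

theorem cornerSum_apply (x : D.Region → ZMod 2) (c : Fin n) :
    D.cornerSum x c = ∑ i : Fin 4, x (D.regionOf (c, i)) := by
  simp [cornerSum]

/-- The change `g` of `x` across an edge is invariant under `opp` because the four corners of a
crossing sum to zero; once `g` vanishes, `x` is constant along the knot. -/
theorem eq_zero_of_cornerSum_eq_zero {x : D.Region → ZMod 2} (hx : D.cornerSum x = 0)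
    (d₀ : Dart n) (h₀ : x (D.regionOf d₀) = 0) (h₁ : x (D.regionOf (rot n d₀)) = 0) :
    x = 0 := by
  set g : Dart n → ZMod 2 := fun d => x (D.regionOf d) + x (D.regionOf (rot n d))
  have g_α (d : Dart n) : g (D.α d) = g d := by
    simp only [g, ← regionOf_α, D.invol, add_comm]
  have g_opp (d : Dart n) : g (opp n d) = g d := by
    have hc := congr_fun hx d.1
    rw [cornerSum_apply, Fin.sum_univ_four_rotate _ d.2, Pi.zero_apply] at hc
    have h4 : d.2 + 2 + 1 = d.2 + 3 := by grind
    refine (CharTwo.add_eq_zero.mp ?_).symm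
    simpa only [g, rot_apply, opp_apply, h4, add_assoc] using hc
  have x_rot (d : Dart n) : x (D.regionOf (rot n d)) = x (D.regionOf d) := by
    have hg : g d = g d₀ := D.apply_eq_of_α_invariant_of_opp_invariant g g_α g_opp d d₀
    simp only [g, h₀, h₁, add_zero] at hg
    exact (CharTwo.add_eq_zero.mp hg).symm
  have x_α (d : Dart n) : x (D.regionOf (D.α d)) = x (D.regionOf d) := by
    rw [regionOf_α, x_rot]
  have x_opp (d : Dart n) : x (D.regionOf (opp n d)) = x (D.regionOf d) := by
    rw [opp_eq_rot_rot, x_rot, x_rot]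
  funext R
  induction R using Quotient.inductionOn with
  | h d => exact (D.apply_eq_of_α_invariant_of_opp_invariant (x ∘ D.regionOf) x_α x_opp d d₀).trans h₀

theorem finrank_ker_cornerSum_le_two : Module.finrank (ZMod 2) (LinearMap.ker D.cornerSum) ≤ 2 := by
  let d₀ : Dart n := (⟨0, D.pos⟩, 0)
  let restrict : LinearMap.ker D.cornerSum →ₗ[ZMod 2] ZMod 2 × ZMod 2 :=
    ((LinearMap.proj (D.regionOf d₀)).prod (LinearMap.proj (D.regionOf (rot n d₀)))).comp
      (LinearMap.ker D.cornerSum).subtype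
  have restrict_injective : Function.Injective restrict := by
    refine (injective_iff_map_eq_zero restrict).mpr fun ⟨x, hx⟩ hx₀ => ?_
    simp only [restrict, LinearMap.coe_comp, Submodule.coe_subtype, Function.comp_apply,
      LinearMap.prod_apply, LinearMap.coe_proj, Function.prod_apply, Function.eval,
      Prod.mk_eq_zero] at hx₀
    exact Subtype.ext (D.eq_zero_of_cornerSum_eq_zero hx d₀ hx₀.1 hx₀.2)
  simpa using LinearMap.finrank_le_finrank_of_injective restrict_injective

theorem cornerSum_surjective : Function.Surjective D.cornerSum := by
  have : Fintype D.Region := Fintype.ofFinite _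
  have rank_nullity := LinearMap.finrank_range_add_finrank_ker D.cornerSum
  rw [Module.finrank_pi, ← Nat.card_eq_fintype_card] at rank_nullity
  have regions : Nat.card D.Region = n + 2 := D.planar
  have := D.finrank_ker_cornerSum_le_two
  rw [← LinearMap.range_eq_top]
  refine Submodule.eq_top_of_finrank_eq (le_antisymm (Submodule.finrank_le _) ?_)
  simp only [Module.finrank_fintype_fun_eq_card, Fintype.card_fin]
  omega

open Classical in
theorem effect_eq_cornerSum (P : Finset D.Region) :
    D.effect P = D.cornerSum fun R => if R ∈ P then 1 else 0 := by
  funext c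
  simp only [effect, M, cornerSum_apply, Nat.card_eq_fintype_card, Fintype.card_subtype,
    Finset.card_filter, Nat.cast_sum, Nat.cast_ite, Nat.cast_one, Nat.cast_zero]
  rw [Finset.sum_comm]
  simp [Finset.sum_ite_eq]

theorem effect_surjective : Function.Surjective D.effect := by
  classical
  have : Fintype D.Region := Fintype.ofFinite _
  intro v
  obtain ⟨x, rfl⟩ := D.cornerSum_surjective v
  refine ⟨Finset.univ.filter (x · = 1), ?_⟩
  rw [effect_eq_cornerSum]
  congr 1
  funext R
  simp only [Finset.mem_filter, Finset.mem_univ, true_and]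
  have eq_zero_of_ne_one : ∀ a : ZMod 2, a ≠ 1 → a = 0 := by decide
  split_ifs with h
  · exact h.symm
  · exact (eq_zero_of_ne_one _ h).symm

end KnotDiagram

/-- `ovr` is the over/under data of `D` (for each crossing, which strand is on top), and
`Unknotted v` says that the underlying curve of `D` with over/under data `v` is a diagram of the
trivial knot. The hypothesis `hcc` is the classical fact that crossing changes unknot `D`. -/
theorem region_crossing_change_is_unknotting_operation
    {n : ℕ} (D : KnotDiagram n) (ovr : Fin n → ZMod 2)
    (Unknotted : (Fin n → ZMod 2) → Prop)
    (hcc : ∃ w : Fin n → ZMod 2, Unknotted w) :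
    ∃ P : Finset D.Region,
      Unknotted (fun c => ovr c + D.effect P c) := by
  obtain ⟨w, hw⟩ := hcc
  obtain ⟨P, hP⟩ := D.effect_surjective (w - ovr)
  exact ⟨P, by simpa [hP] using hw⟩
end

section
/- For any knot diagram D, u_R(D) is at most half the number of regions of D. -/
/-!
Under a checkerboard colouring the four corners of every crossing alternate in colour, so each
colour class occupies exactly two corners of each crossing: over `𝔽₂` the region crossing changes
at a whole colour class cancel. Hence, in an unknotting set of regions, the regions of one colour
may be replaced by their complement within that colour class without changing the effect, and
choosing the smaller of the two in each class leaves at most half of the regions.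
-/

open Finset

namespace Finset

variable {ι G : Type*} [AddCommGroup G] [Module (ZMod 2) G] {s t : Finset ι} {f : ι → G}

theorem sum_sdiff_eq_sum_of_sum_eq_zero [DecidableEq ι] (hts : t ⊆ s) (hs : ∑ i ∈ s, f i = 0) :
    ∑ i ∈ s \ t, f i = ∑ i ∈ t, f i := by
  rw [← ZModModule.neg_eq_self (∑ i ∈ t, f i), eq_neg_iff_add_eq_zero, sum_sdiff hts, hs]

theorem exists_subset_two_mul_card_le_sum_eq (hts : t ⊆ s) (hs : ∑ i ∈ s, f i = 0) :
    ∃ u ⊆ s, 2 * #u ≤ #s ∧ ∑ i ∈ u, f i = ∑ i ∈ t, f i := by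
  classical
  by_cases ht : 2 * #t ≤ #s
  · exact ⟨t, hts, ht, rfl⟩
  · refine ⟨s \ t, sdiff_subset, ?_, sum_sdiff_eq_sum_of_sum_eq_zero hts hs⟩
    rw [card_sdiff_of_subset hts]
    omega

theorem exists_two_mul_card_le_sum_eq_of_sum_fiber_eq_zero {β : Type*} [Fintype ι] [Fintype β]
    [DecidableEq β] (col : ι → β) (hf : ∀ b, ∑ i with col i = b, f i = 0) (S : Finset ι) :
    ∃ P : Finset ι, 2 * #P ≤ Fintype.card ι ∧ ∑ i ∈ P, f i = ∑ i ∈ S, f i := by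
  classical
  choose u hu_sub hu_card hu_sum using fun b =>
    exists_subset_two_mul_card_le_sum_eq (filter_subset_filter (col · = b) (subset_univ S)) (hf b)
  have hu_disj : ((univ : Finset β) : Set β).PairwiseDisjoint u :=
    (Set.pairwiseDisjoint_filter col _ univ).mono_on fun b _ => hu_sub b
  refine ⟨univ.biUnion u, ?_, ?_⟩
  · calc 2 * #(univ.biUnion u) ≤ ∑ b, 2 * #(u b) := by
          rw [← mul_sum]; exact Nat.mul_le_mul_left _ card_biUnion_le
      _ ≤ ∑ b, #{i | col i = b} := sum_le_sum fun b _ => hu_card b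
      _ = Fintype.card ι := (card_eq_sum_card_fiberwise fun i _ => mem_univ (col i)).symm
  · rw [sum_biUnion hu_disj]
    simp_rw [hu_sum]
    exact sum_fiberwise S col f

theorem sum_card_filter_eq_card_filter_mem {α : Type*} [Fintype α] [DecidableEq ι]
    (g : α → ι) (s : Finset ι) : ∑ R ∈ s, #{a | g a = R} = #{a | g a ∈ s} := by
  rw [card_eq_sum_card_fiberwise (s := {a | g a ∈ s}) (t := s) fun a ha => (mem_filter.1 ha).2]
  refine sum_congr rfl fun R hR => congrArg card ?_
  ext a
  simp only [mem_filter, mem_univ, true_and]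
  exact (and_iff_right_of_imp fun h => h ▸ hR).symm

end Finset

theorem Fin.card_filter_eq_two_of_forall_ne_add_one (g : Fin 4 → Bool) (hg : ∀ i, g i ≠ g (i + 1))
    (b : Bool) : #{i | g i = b} = 2 := by
  revert g b; decide

theorem sum_color_class_corner_parity_eq_zero {n : ℕ} {Region : Type*} [Fintype Region]
    [DecidableEq Region] (corner : Fin n → Fin 4 → Region) (col : Region → Bool)
    (hcol : ∀ c i, col (corner c i) ≠ col (corner c (i + 1))) (b : Bool) (c : Fin n) :
    ∑ R with col R = b, (#{i | corner c i = R} : ZMod 2) = 0 := by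
  rw [← Nat.cast_sum, sum_card_filter_eq_card_filter_mem]
  simp only [mem_filter, mem_univ, true_and]
  rw [Fin.card_filter_eq_two_of_forall_ne_add_one _ (hcol c)]
  rfl

theorem region_unknotting_number_le_half_number_of_regions_general
    {n : ℕ} {Region : Type*} [Fintype Region] [DecidableEq Region]
    (corner : Fin n → Fin 4 → Region)
    (col : Region → Bool)
    (hcol : ∀ c i, col (corner c i) ≠ col (corner c (i + 1)))
    (M : Region → Fin n → ZMod 2)
    (hM : ∀ R c, M R c =
      ((Finset.univ.filter fun i : Fin 4 => corner c i = R).card : ZMod 2))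
    (overV : Fin n → ZMod 2)
    (Unknotted : (Fin n → ZMod 2) → Prop)
    (hunknottable : ∃ S : Finset Region,
      Unknotted (fun c => overV c + ∑ R ∈ S, M R c)) :
    ((sInf {k : ℕ | ∃ P : Finset Region, P.card = k ∧
        Unknotted (fun c => overV c + ∑ R ∈ P, M R c)} : ℕ) : ℚ)
      ≤ (Fintype.card Region : ℚ) / 2 := by
  obtain ⟨S, hS⟩ := hunknottable
  have hclass (b : Bool) : ∑ R with col R = b, M R = 0 := by
    funext c
    simpa only [Finset.sum_apply, Pi.zero_apply, hM] using
      sum_color_class_corner_parity_eq_zero corner col hcol b c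
  obtain ⟨P, hP_card, hP_sum⟩ := exists_two_mul_card_le_sum_eq_of_sum_fiber_eq_zero col hclass S
  have hP : Unknotted (fun c => overV c + ∑ R ∈ P, M R c) := by
    simpa only [← Finset.sum_apply, hP_sum] using hS
  calc ((sInf _ : ℕ) : ℚ) ≤ #P := by gcongr; exact Nat.sInf_le ⟨P, rfl, hP⟩
    _ ≤ Fintype.card Region / 2 := by
      rw [le_div_iff₀ two_pos]
      exact_mod_cast (by omega : #P * 2 ≤ Fintype.card Region)

theorem region_unknotting_number_le_half_number_of_regions
    {n : ℕ} {Region : Type*} [Fintype Region] [DecidableEq Region]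
    (corner : Fin n → Fin 4 → Region)
    (hadj : ∀ c i, corner c i ≠ corner c (i + 1))
    (col : Region → Bool)
    (hcol : ∀ c i, col (corner c i) ≠ col (corner c (i + 1)))
    (M : Region → Fin n → ZMod 2)
    (hM : ∀ R c, M R c =
      ((Finset.univ.filter fun i : Fin 4 => corner c i = R).card : ZMod 2))
    (overV : Fin n → ZMod 2)
    (Unknotted : (Fin n → ZMod 2) → Prop)
    (hunknottable : ∃ S : Finset Region,
      Unknotted (fun c => overV c + ∑ R ∈ S, M R c)) :
    ((sInf {k : ℕ | ∃ P : Finset Region, P.card = k ∧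
        Unknotted (fun c => overV c + ∑ R ∈ P, M R c)} : ℕ) : ℚ)
      ≤ (Fintype.card Region : ℚ) / 2 :=
  region_unknotting_number_le_half_number_of_regions_general corner col hcol M hM overV Unknotted
    hunknottable
end
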